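/- Let r = (r_x, r_y, r_z) ∈ ℝ³ with |r|² = r_x² + r_y² + r_z² ≤ 1, and define the three qubit density matrices ρ₁ = (1/2)·[[1 + r_z, r_x − i r_y], [r_x + i r_y, 1 − r_z]], ρ₂ = (1/2)·[[1 + r_y, r_z − i r_x], [r_z + i r_x, 1 − r_y]], ρ₃ = (1/2)·[[1 + r_x, r_y − i r_z], [r_y + i r_z, 1 − r_x]] (the representations of the same state under three mutually unbiased bases). Then (1 − M_Re(ρ₁))² + (1 − M_Re(ρ₂))² + (1 − M_Re(ρ₃))² ≥ ( √((1 − |r|²)(3 − 2|r|²)) + 3 + 2|r|² )/2, and equality holds if and only if |r| = 1 (i.e. the state is pure). -/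

import Mathlib

/-!
For a `2 × 2` positive semidefinite `M` with eigenvalues `λ₁, λ₂`, `Tr √M = √λ₁ + √λ₂`
squares to `Tr M + 2 √(det M)`; hence `F(ρ, σ)² = Tr ρσ + 2 √(det ρ det σ)` for qubit states.
Taking the real part of a state with Bloch vector `(u, v, w)` drops `v`, so with `t = |r|²`
this gives `(1 - M_Re ρ)² = (1 + t - v²)/2 + √((1 - t)(1 - t + v²))/2`. In the three bases
each coordinate of `r` plays the role of `v` once, and with `s = 1 - t` the three terms
`s (s + r_i²)` add up to `s (3 - 2t)`. The bound is subadditivity of `√`, which is strict as soon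
as two of the terms are positive, i.e. as soon as `s > 0`.
-/

open Matrix Complex ComplexOrder Classical

/-- The positive semidefinite square root of a matrix (junk value `0` if not PSD). -/
noncomputable def psqrt {n : Type*} [Fintype n] [DecidableEq n] (A : Matrix n n ℂ) :
    Matrix n n ℂ :=
  if h : A.PosSemidef then (h.1.eigenvectorUnitary : Matrix n n ℂ) *
    diagonal ((↑) ∘ (Real.sqrt ·) ∘ h.1.eigenvalues) * (star h.1.eigenvectorUnitary : Matrix n n ℂ) else 0

/-- Entrywise complex conjugate of a matrix. -/
def mconj {m n : Type*} (A : Matrix m n ℂ) : Matrix m n ℂ := A.map (starRingEnd ℂ)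

/-- Fidelity `F(ρ,σ) = Tr √(√ρ σ √ρ)`. -/
noncomputable def fidelity {n : Type*} [Fintype n] [DecidableEq n] (ρ σ : Matrix n n ℂ) : ℝ :=
  ((psqrt (psqrt ρ * σ * psqrt ρ)).trace).re

/-- The real part state `Re(ρ) = (ρ + ρ*)/2`. -/
noncomputable def reState {n : Type*} (ρ : Matrix n n ℂ) : Matrix n n ℂ :=
  ((1 : ℂ)/2) • (ρ + mconj ρ)

/-- The imaginarity measure `M_Re(ρ) = 1 - F(ρ, Re(ρ))`. -/
noncomputable def MRe {n : Type*} [Fintype n] [DecidableEq n] (ρ : Matrix n n ℂ) : ℝ :=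
  1 - fidelity ρ (reState ρ)

/-- A density matrix: positive semidefinite with trace 1. -/
def IsDensityMatrix {n : Type*} [Fintype n] (ρ : Matrix n n ℂ) : Prop :=
  ρ.PosSemidef ∧ ρ.trace = 1

section PositiveSquareRoot

variable {n : Type*} [Fintype n] [DecidableEq n] {A : Matrix n n ℂ}

open scoped MatrixOrder

lemma psqrt_eq_cfcSqrt (hA : A.PosSemidef) : psqrt A = CFC.sqrt A := by
  rw [psqrt, dif_pos hA, CFC.sqrt_eq_cfc, cfc_nnreal_eq_real _ A, hA.1.cfc_eq]
  simp only [IsHermitian.cfc, Real.coe_sqrt, Real.coe_toNNReal', Unitary.conjStarAlgAut_apply]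
  congr 3
  funext i
  simp [max_eq_left (hA.eigenvalues_nonneg i)]

lemma Matrix.PosSemidef.psqrt (hA : A.PosSemidef) : (psqrt A).PosSemidef := by
  rw [psqrt_eq_cfcSqrt hA]
  exact (CFC.sqrt_nonneg A).posSemidef

lemma psqrt_mul_self (hA : A.PosSemidef) : psqrt A * psqrt A = A := by
  rw [psqrt_eq_cfcSqrt hA]
  exact CFC.sqrt_mul_sqrt_self A hA.nonneg

lemma trace_psqrt (hA : A.PosSemidef) :
    (psqrt A).trace = ∑ i, ((√(hA.1.eigenvalues i) : ℝ) : ℂ) := by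
  rw [psqrt, dif_pos hA, trace_mul_cycle, Unitary.coe_star_mul_self, one_mul, trace_diagonal]
  rfl

end PositiveSquareRoot

section FinTwo

variable {A : Matrix (Fin 2) (Fin 2) ℂ}

lemma Matrix.IsHermitian.trace_fin_two (hA : A.IsHermitian) :
    A.trace = (hA.eigenvalues 0 + hA.eigenvalues 1 : ℝ) := by
  simp [hA.trace_eq_sum_eigenvalues, Fin.sum_univ_two]

lemma Matrix.IsHermitian.det_fin_two (hA : A.IsHermitian) :
    A.det = (hA.eigenvalues 0 * hA.eigenvalues 1 : ℝ) := by
  simp [hA.det_eq_prod_eigenvalues, Fin.prod_univ_two]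

lemma Matrix.IsHermitian.posSemidef_fin_two (hA : A.IsHermitian) (htr : 0 < A.trace)
    (hdet : 0 ≤ A.det) : A.PosSemidef := by
  rw [hA.trace_fin_two, Complex.zero_lt_real] at htr
  rw [hA.det_fin_two, Complex.zero_le_real] at hdet
  refine hA.posSemidef_iff_eigenvalues_nonneg.mpr fun i => ?_
  fin_cases i <;> simp <;> nlinarith

lemma re_trace_psqrt_fin_two (hA : A.PosSemidef) :
    (psqrt A).trace.re = √(A.trace.re + 2 * √A.det.re) := by
  have h0 := hA.eigenvalues_nonneg 0
  have h1 := hA.eigenvalues_nonneg 1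
  rw [trace_psqrt hA, hA.1.trace_fin_two, hA.1.det_fin_two]
  simp only [Fin.sum_univ_two, Complex.add_re, Complex.ofReal_re, Real.sqrt_mul h0]
  symm
  rw [Real.sqrt_eq_iff_mul_self_eq (by positivity) (by positivity)]
  nlinarith [Real.mul_self_sqrt h0, Real.mul_self_sqrt h1]

lemma fidelity_fin_two {ρ σ : Matrix (Fin 2) (Fin 2) ℂ} (hρ : ρ.PosSemidef) (hσ : σ.PosSemidef) :
    fidelity ρ σ = √((ρ * σ).trace.re + 2 * √(ρ.det * σ.det).re) := by
  set B := psqrt ρ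
  have hB : B.PosSemidef := hρ.psqrt
  have hBB : B * B = ρ := psqrt_mul_self hρ
  have hM : (B * σ * B).PosSemidef := by
    simpa only [hB.1.eq] using hσ.conjTranspose_mul_mul_same B
  have htr : (B * σ * B).trace = (ρ * σ).trace := by
    rw [trace_mul_cycle, hBB]
  have hdet : (B * σ * B).det = ρ.det * σ.det := by
    rw [← hBB]
    simp only [det_mul]
    ring
  rw [fidelity, re_trace_psqrt_fin_two hM, htr, hdet]

end FinTwo

/-- The Bloch representation `(1 + u σₓ + v σ_y + w σ_z) / 2` of a qubit state. -/
noncomputable def blochMatrix (u v w : ℝ) : Matrix (Fin 2) (Fin 2) ℂ :=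
  ((1:ℂ)/2) • !![1 + (w:ℂ), (u:ℂ) - Complex.I * (v:ℂ); (u:ℂ) + Complex.I * (v:ℂ), 1 - (w:ℂ)]

section Bloch

variable (u v w : ℝ)

lemma blochMatrix_isHermitian : (blochMatrix u v w).IsHermitian := by
  ext i j
  fin_cases i <;> fin_cases j <;> simp [blochMatrix, Complex.ext_iff]

lemma trace_blochMatrix : (blochMatrix u v w).trace = 1 := by
  simp [blochMatrix, trace_fin_two]
  ring

lemma det_blochMatrix : (blochMatrix u v w).det = ((1 - (u ^ 2 + v ^ 2 + w ^ 2)) / 4 : ℝ) := by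
  apply Complex.ext <;> simp [blochMatrix, det_fin_two, pow_two] <;> ring

lemma posSemidef_blochMatrix (h : u ^ 2 + v ^ 2 + w ^ 2 ≤ 1) : (blochMatrix u v w).PosSemidef := by
  refine (blochMatrix_isHermitian u v w).posSemidef_fin_two ?_ ?_
  · rw [trace_blochMatrix]
    exact one_pos
  · rw [det_blochMatrix, Complex.zero_le_real]
    linarith

lemma reState_blochMatrix : reState (blochMatrix u v w) = blochMatrix u 0 w := by
  ext i j
  fin_cases i <;> fin_cases j <;> simp [reState, mconj, blochMatrix, Complex.ext_iff] <;> ring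

lemma re_trace_blochMatrix_mul : (blochMatrix u v w * blochMatrix u 0 w).trace.re
    = (1 + u ^ 2 + w ^ 2) / 2 := by
  simp [blochMatrix, trace_fin_two]
  ring

lemma sq_one_sub_MRe_blochMatrix {t : ℝ} (ht : u ^ 2 + v ^ 2 + w ^ 2 = t) (h : t ≤ 1) :
    (1 - MRe (blochMatrix u v w)) ^ 2 = (1 + t - v ^ 2) / 2 + √((1 - t) * (1 - t + v ^ 2)) / 2 := by
  have h₀ : u ^ 2 + 0 ^ 2 + w ^ 2 ≤ 1 := by nlinarith
  rw [MRe, sub_sub_cancel, reState_blochMatrix,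
    fidelity_fin_two (posSemidef_blochMatrix u v w (ht ▸ h)) (posSemidef_blochMatrix u 0 w h₀),
    re_trace_blochMatrix_mul, det_blochMatrix, det_blochMatrix,
    ← Complex.ofReal_mul, Complex.ofReal_re, Real.sq_sqrt (by positivity)]
  subst ht
  rw [show (1 - (u ^ 2 + v ^ 2 + w ^ 2)) / 4 * ((1 - (u ^ 2 + 0 ^ 2 + w ^ 2)) / 4)
      = (1 - (u ^ 2 + v ^ 2 + w ^ 2)) * (1 - (u ^ 2 + v ^ 2 + w ^ 2) + v ^ 2) / 4 ^ 2 by ring,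
    Real.sqrt_div' _ (by positivity), Real.sqrt_sq (by norm_num)]
  ring

end Bloch

lemma Real.sqrt_add_le_add_sqrt (x y : ℝ) : √(x + y) ≤ √x + √y := by
  have hx : x ≤ √x ^ 2 := Real.sq_sqrt' ▸ le_max_left x 0
  have hy : y ≤ √y ^ 2 := Real.sq_sqrt' ▸ le_max_left y 0
  rw [Real.sqrt_le_iff]
  exact ⟨by positivity, by nlinarith [Real.sqrt_nonneg x, Real.sqrt_nonneg y]⟩

lemma Real.sqrt_add_lt_add_sqrt {x y : ℝ} (hx : 0 < x) (hy : 0 < y) : √(x + y) < √x + √y := by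
  rw [Real.sqrt_lt' (by positivity)]
  nlinarith [Real.sq_sqrt hx.le, Real.sq_sqrt hy.le, Real.sqrt_pos.2 hx, Real.sqrt_pos.2 hy]

lemma sqrt_mul_le_sum_sqrt_mul (s a b c : ℝ) :
    √(s * (3 * s + a + b + c)) ≤ √(s * (s + a)) + √(s * (s + b)) + √(s * (s + c)) := by
  rw [show s * (3 * s + a + b + c) = s * (s + a) + s * (s + b) + s * (s + c) by ring]
  linarith [Real.sqrt_add_le_add_sqrt (s * (s + a) + s * (s + b)) (s * (s + c)),
    Real.sqrt_add_le_add_sqrt (s * (s + a)) (s * (s + b))]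

lemma sqrt_mul_eq_sum_sqrt_mul_iff {s a b : ℝ} (c : ℝ) (hs : 0 ≤ s) (ha : 0 ≤ a) (hb : 0 ≤ b) :
    √(s * (3 * s + a + b + c)) = √(s * (s + a)) + √(s * (s + b)) + √(s * (s + c)) ↔ s = 0 := by
  refine ⟨fun h => ?_, fun h => by simp [h]⟩
  by_contra hs₀
  have hs' : 0 < s := lt_of_le_of_ne hs (Ne.symm hs₀)
  rw [show s * (3 * s + a + b + c) = s * (s + a) + s * (s + b) + s * (s + c) by ring] at h
  linarith [Real.sqrt_add_le_add_sqrt (s * (s + a) + s * (s + b)) (s * (s + c)),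
    Real.sqrt_add_lt_add_sqrt (x := s * (s + a)) (y := s * (s + b)) (by positivity) (by positivity)]

theorem stmt17 (rx ry rz : ℝ) (hr : rx ^ 2 + ry ^ 2 + rz ^ 2 ≤ 1) :
    (1 - MRe (((1:ℂ)/2) • !![1 + (rz:ℂ), (rx:ℂ) - Complex.I * (ry:ℂ); (rx:ℂ) + Complex.I * (ry:ℂ), 1 - (rz:ℂ)] : Matrix (Fin 2) (Fin 2) ℂ)) ^ 2 + (1 - MRe (((1:ℂ)/2) • !![1 + (ry:ℂ), (rz:ℂ) - Complex.I * (rx:ℂ); (rz:ℂ) + Complex.I * (rx:ℂ), 1 - (ry:ℂ)] : Matrix (Fin 2) (Fin 2) ℂ)) ^ 2 + (1 - MRe (((1:ℂ)/2) • !![1 + (rx:ℂ), (ry:ℂ) - Complex.I * (rz:ℂ); (ry:ℂ) + Complex.I * (rz:ℂ), 1 - (rx:ℂ)] : Matrix (Fin 2) (Fin 2) ℂ)) ^ 2 ≥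
      (Real.sqrt ((1 - (rx ^ 2 + ry ^ 2 + rz ^ 2)) * (3 - 2 * (rx ^ 2 + ry ^ 2 + rz ^ 2))) + 3 + 2 * (rx ^ 2 + ry ^ 2 + rz ^ 2)) / 2 ∧
    ((1 - MRe (((1:ℂ)/2) • !![1 + (rz:ℂ), (rx:ℂ) - Complex.I * (ry:ℂ); (rx:ℂ) + Complex.I * (ry:ℂ), 1 - (rz:ℂ)] : Matrix (Fin 2) (Fin 2) ℂ)) ^ 2 + (1 - MRe (((1:ℂ)/2) • !![1 + (ry:ℂ), (rz:ℂ) - Complex.I * (rx:ℂ); (rz:ℂ) + Complex.I * (rx:ℂ), 1 - (ry:ℂ)] : Matrix (Fin 2) (Fin 2) ℂ)) ^ 2 + (1 - MRe (((1:ℂ)/2) • !![1 + (rx:ℂ), (ry:ℂ) - Complex.I * (rz:ℂ); (ry:ℂ) + Complex.I * (rz:ℂ), 1 - (rx:ℂ)] : Matrix (Fin 2) (Fin 2) ℂ)) ^ 2 =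
      (Real.sqrt ((1 - (rx ^ 2 + ry ^ 2 + rz ^ 2)) * (3 - 2 * (rx ^ 2 + ry ^ 2 + rz ^ 2))) + 3 + 2 * (rx ^ 2 + ry ^ 2 + rz ^ 2)) / 2 ↔ rx ^ 2 + ry ^ 2 + rz ^ 2 = 1) := by
  simp only [← blochMatrix.eq_1]
  obtain ⟨t, ht⟩ : ∃ t, rx ^ 2 + ry ^ 2 + rz ^ 2 = t := ⟨_, rfl⟩
  rw [ht] at hr ⊢
  rw [sq_one_sub_MRe_blochMatrix rx ry rz ht hr, sq_one_sub_MRe_blochMatrix rz rx ry (by linarith) hr,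
    sq_one_sub_MRe_blochMatrix ry rz rx (by linarith) hr,
    show 3 - 2 * t = 3 * (1 - t) + ry ^ 2 + rx ^ 2 + rz ^ 2 by linarith]
  have hle := sqrt_mul_le_sum_sqrt_mul (1 - t) (ry ^ 2) (rx ^ 2) (rz ^ 2)
  have heq := (sqrt_mul_eq_sum_sqrt_mul_iff (rz ^ 2) (sub_nonneg.2 hr) (sq_nonneg ry)
    (sq_nonneg rx)).trans (sub_eq_zero.trans eq_comm)
  exact ⟨by linarith, fun h => heq.1 (by linarith), fun h => by linarith [heq.2 h]⟩
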